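/- arXiv:1403.4148 — 4 statements merged into one kernel-verified Lean document; each statement's English description precedes it below -/
import Mathlib

section
/- Let p₁ : X → G and p₂ : Y → G be augmented racks over a group G. Then the cartesian product X × Y with the diagonal right action (x,y)·g := (x·g, y·g) and the map p(x,y) := p₁(x)p₂(y) is again an augmented rack over G, and the map c : X × Y → Y × X defined by c(x,y) := (y, x·p₂(y)) is a bijection which is G-equivariant and satisfies p₂(y)·p₁(x·p₂(y)) = p₁(x)p₂(y) (i.e., c is an isomorphism of augmented racks from X ⊗ Y to Y ⊗ X). -/
/-- Let `p₁ : X → G` and `p₂ : Y → G` be augmented racks over a group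
`G`. Then `X × Y` with the diagonal right action `(x,y)·g := (x·g, y·g)` and the map
`p(x,y) := p₁(x)p₂(y)` is again an augmented rack over `G`, and
`c : X × Y → Y × X`, `c(x,y) := (y, x·p₂(y))` is a bijection which is `G`-equivariant
and satisfies `p₂(y)·p₁(x·p₂(y)) = p₁(x)p₂(y)`, i.e. `c` is an isomorphism of
augmented racks `X ⊗ Y → Y ⊗ X`. -/
theorem stmt2 (G : Type) [Group G] (X Y : Type)
    (actX : X → G → X) (actY : Y → G → Y)
    (actX_one : ∀ x, actX x 1 = x)
    (actX_mul : ∀ x (g h : G), actX (actX x g) h = actX x (g * h))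
    (actY_one : ∀ y, actY y 1 = y)
    (actY_mul : ∀ y (g h : G), actY (actY y g) h = actY y (g * h))
    (p₁ : X → G) (p₂ : Y → G)
    (aug₁ : ∀ x (g : G), p₁ (actX x g) = g⁻¹ * p₁ x * g)
    (aug₂ : ∀ y (g : G), p₂ (actY y g) = g⁻¹ * p₂ y * g) :
    -- the product is an augmented rack
    (∀ q : X × Y, (actX q.1 1, actY q.2 1) = q) ∧
    (∀ (q : X × Y) (g h : G),
      (actX (actX q.1 g) h, actY (actY q.2 g) h) = (actX q.1 (g * h), actY q.2 (g * h))) ∧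
    (∀ (q : X × Y) (g : G),
      p₁ (actX q.1 g) * p₂ (actY q.2 g) = g⁻¹ * (p₁ q.1 * p₂ q.2) * g) ∧
    -- c is a bijection
    (Function.Bijective (fun q : X × Y => ((q.2, actX q.1 (p₂ q.2)) : Y × X))) ∧
    -- c is G-equivariant
    (∀ (q : X × Y) (g : G),
      ((actY q.2 g, actX (actX q.1 g) (p₂ (actY q.2 g))) : Y × X)
        = (actY q.2 g, actX (actX q.1 (p₂ q.2)) g)) ∧
    -- c intertwines the augmentation maps
    (∀ (x : X) (y : Y), p₂ y * p₁ (actX x (p₂ y)) = p₁ x * p₂ y) := by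
  refine ⟨fun q => by simp [actX_one, actY_one],
    fun q g h => by simp [actX_mul, actY_mul],
    fun q g => by simp [aug₁, aug₂]; group,
    ?_, fun q g => by simp [aug₂, actX_mul]; group, fun x y => by simp [aug₁]; group⟩
  have : Function.LeftInverse (fun r : Y × X => ((actX r.2 (p₂ r.1)⁻¹, r.1) : X × Y))
      (fun q : X × Y => ((q.2, actX q.1 (p₂ q.2)) : Y × X)) ∧
      Function.RightInverse (fun r : Y × X => ((actX r.2 (p₂ r.1)⁻¹, r.1) : X × Y))
      (fun q : X × Y => ((q.2, actX q.1 (p₂ q.2)) : Y × X)) := by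
    constructor <;> intro q <;> simp [actX_mul, actX_one]
  exact ⟨this.1.injective, this.2.surjective⟩
end

section
/- Let H be a Hopf algebra over a field k with antipode S and counit ε. Then the kernel ker ε of the counit, equipped with the right adjoint action g ⊳ h := S(h₍₁₎) g h₍₂₎ (for g ∈ ker ε, h ∈ H) and the right coaction Δ̃ : ker ε → ker ε ⊗ H, h ↦ h₍₁₎ ⊗ h₍₂₎ − 1 ⊗ h, is a Yetter–Drinfel'd module over H; in particular ⊳ is a right H-module action, Δ̃ is a well-defined counital coassociative right H-coaction with values in (ker ε) ⊗ H, and the Yetter–Drinfel'd compatibility condition holds. -/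
/-!
All Sweedler computations take place in convolution algebras `Hom(H, A)`, whose associativity
does the reindexing of iterated coproducts. Write `ι₁ x = x ⊗ 1`, `ι₂ x = 1 ⊗ x` and
`ad_g = (S(·) g) * id`, so that `g ⊳ h = ad_g h`. Since `Δ = ι₁ * ι₂` and `Δ ∘ S` is the
convolution inverse of `Δ`, one gets `ι₂ * (Δ ∘ S) = ι₁ ∘ S`; as `Δ` is multiplicative, the left
side `h ↦ (1 ⊗ h₍₁₎) Δ(g ⊳ h₍₂₎)` of the Yetter–Drinfel'd condition for the coaction `Δ` becomes
`h ↦ (S(h₍₁₎) ⊗ 1) Δ(g) Δ(h₍₂₎)`, which is also what the right side reduces to. The correction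
term `h ↦ 1 ⊗ h` of `Δ̃` contributes `1 ⊗ gh` to both sides, because `id * ad_g = g ·` and
`ad_1` is the convolution unit.
-/

open TensorProduct LinearMap

/-- The right adjoint action `g ⊗ h ↦ S(h₍₁₎) g h₍₂₎` of a Hopf algebra on itself,
as a linear map `H ⊗ H → H`. -/
noncomputable def adAct (k H : Type) [Field k] [Ring H] [HopfAlgebra k H] :
    H ⊗[k] H →ₗ[k] H :=
  (LinearMap.mul' k H)
  ∘ₗ (rTensor H ((LinearMap.mul' k H) ∘ₗ (TensorProduct.comm k H H).toLinearMap))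
  ∘ₗ (TensorProduct.assoc k H H H).symm.toLinearMap
  ∘ₗ (lTensor H (rTensor H (HopfAlgebra.antipode (R := k))))
  ∘ₗ (lTensor H (Coalgebra.comul (R := k)))

/-- The coaction `h ↦ Δ(h) − 1 ⊗ h` on a Hopf algebra. -/
noncomputable def tilDelta (k H : Type) [Field k] [Ring H] [HopfAlgebra k H] :
    H →ₗ[k] H ⊗[k] H :=
  Coalgebra.comul - (TensorProduct.mk k H H) 1

/-- For a right action `act` and right coaction `ρ` on `M`, the map
`x ⊗ h ↦ (xh₍₂₎)₍₀₎ ⊗ h₍₁₎(xh₍₂₎)₍₁₎` (left side of the Yetter–Drinfel'd condition). -/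
noncomputable def ydL (k H M : Type) [Field k] [Ring H] [HopfAlgebra k H]
    [AddCommGroup M] [Module k M]
    (act : M ⊗[k] H →ₗ[k] M) (ρ : M →ₗ[k] M ⊗[k] H) : M ⊗[k] H →ₗ[k] M ⊗[k] H :=
  (lTensor M ((LinearMap.mul' k H) ∘ₗ (TensorProduct.comm k H H).toLinearMap))
  ∘ₗ (TensorProduct.assoc k M H H).toLinearMap
  ∘ₗ (rTensor H ρ)
  ∘ₗ (rTensor H act)
  ∘ₗ (TensorProduct.assoc k M H H).symm.toLinearMap
  ∘ₗ (lTensor M ((TensorProduct.comm k H H).toLinearMap ∘ₗ Coalgebra.comul))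

/-- For a right action `act` and right coaction `ρ` on `M`, the map
`x ⊗ h ↦ x₍₀₎h₍₁₎ ⊗ x₍₁₎h₍₂₎` (right side of the Yetter–Drinfel'd condition). -/
noncomputable def ydR (k H M : Type) [Field k] [Ring H] [HopfAlgebra k H]
    [AddCommGroup M] [Module k M]
    (act : M ⊗[k] H →ₗ[k] M) (ρ : M →ₗ[k] M ⊗[k] H) : M ⊗[k] H →ₗ[k] M ⊗[k] H :=
  (TensorProduct.map act (LinearMap.mul' k H))
  ∘ₗ (TensorProduct.tensorTensorTensorComm k M H H H).toLinearMap
  ∘ₗ (TensorProduct.map ρ (Coalgebra.comul (R := k)))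

open WithConv Coalgebra HopfAlgebra

section Convolution
variable {R C A B : Type*} [CommSemiring R] [AddCommMonoid C] [Module R C] [Coalgebra R C]
  [Semiring A] [Algebra R A] [Semiring B] [Algebra R B]

lemma algHom_comp_convMul (φ : A →ₐ[R] B) (f g : C →ₗ[R] A) :
    toConv (φ.toLinearMap ∘ₗ (toConv f * toConv g).ofConv)
      = toConv (φ.toLinearMap ∘ₗ f) * toConv (φ.toLinearMap ∘ₗ g) :=
  congrArg toConv (algHom_comp_convMul_distrib φ (toConv f) (toConv g))

lemma mulLeft_comp_convMul (a : A) (f g : C →ₗ[R] A) :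
    toConv (mulLeft R a ∘ₗ (toConv f * toConv g).ofConv)
      = toConv (mulLeft R a ∘ₗ f) * toConv g := by
  ext c
  simp [(ℛ R c).convMul_apply, mul_assoc]

lemma mulRight_comp_convMul (a : A) (f g : C →ₗ[R] A) :
    toConv (mulRight R a ∘ₗ (toConv f * toConv g).ofConv)
      = toConv f * toConv (mulRight R a ∘ₗ g) := by
  ext c
  simp [(ℛ R c).convMul_apply, mul_assoc]

lemma convMul_mulLeft_comp (a : A) (f g : C →ₗ[R] A) :
    toConv f * toConv (mulLeft R a ∘ₗ g) = toConv (mulRight R a ∘ₗ f) * toConv g := by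
  ext c
  simp [(ℛ R c).convMul_apply, mul_assoc]

lemma mulRight_comp_convOne (a : A) :
    mulRight R a ∘ₗ (1 : WithConv (C →ₗ[R] A)).ofConv
      = mulLeft R a ∘ₗ (1 : WithConv (C →ₗ[R] A)).ofConv := by
  ext c
  simp [Algebra.commutes]

end Convolution

section
open Algebra.TensorProduct
variable {R H : Type*} [CommSemiring R] [Semiring H]

local notation "S" => antipode R (A := H)
local notation "δ" => comul (R := R) (A := H)
local notation "ι₁" => AlgHom.toLinearMap (includeLeft : H →ₐ[R] H ⊗[R] H)
local notation "ι₂" => AlgHom.toLinearMap (includeRight : H →ₐ[R] H ⊗[R] H)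

section Bialgebra
variable [Bialgebra R H]

lemma comul_comp_mulRight (g : H) : δ ∘ₗ mulRight R g = mulRight R (δ g) ∘ₗ δ := by
  ext x
  simp [Bialgebra.comul_mul]

lemma toConv_comul : toConv δ = toConv ι₁ * toConv ι₂ := by
  ext h
  simp [(ℛ R h).convMul_apply, ← (ℛ R h).eq]

lemma includeLeft_convMul_includeRight_comp_mulLeft (b : H) :
    toConv ι₁ * toConv (ι₂ ∘ₗ mulLeft R b) = toConv (mulLeft R ((1 : H) ⊗ₜ[R] b) ∘ₗ δ) := by
  ext h
  simp [(ℛ R h).convMul_apply, ← (ℛ R h).eq]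

end Bialgebra

section HopfAlgebra
variable [HopfAlgebra R H]

variable (R) in
noncomputable def adConv (g : H) : WithConv (H →ₗ[R] H) :=
  toConv (mulRight R g ∘ₗ S) * toConv LinearMap.id

lemma adConv_one : adConv R (1 : H) = 1 := by
  simp [adConv, antipode_mul_id]

lemma id_convMul_adConv (g : H) :
    toConv LinearMap.id * adConv R g = toConv (mulLeft R g) := by
  rw [adConv, ← mul_assoc, ← mulRight_comp_convMul, id_mul_antipode, mulRight_comp_convOne,
    ← mulLeft_comp_convMul, toConv_ofConv, one_mul]
  rfl

lemma includeRight_convMul_comul_comp_antipode :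
    toConv ι₂ * toConv (δ ∘ₗ S) = toConv (ι₁ ∘ₗ S) := by
  have hinv : toConv (ι₁ ∘ₗ S) * toConv ι₁ = 1 := by
    have := algHom_comp_convMul (includeLeft : H →ₐ[R] H ⊗[R] H) S LinearMap.id
    rw [LinearMap.comp_id, antipode_mul_id, LinearMap.algHom_comp_convOne, toConv_ofConv] at this
    exact this.symm
  have hleft : toConv (ι₁ ∘ₗ S) * toConv δ = toConv ι₂ := by
    rw [toConv_comul, ← mul_assoc, hinv, one_mul]
  rw [← hleft, mul_assoc, comul_right_inv, mul_one]

lemma includeRight_convMul_comul_comp_adConv (g : H) :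
    toConv ι₂ * toConv (δ ∘ₗ (adConv R g).ofConv)
      = toConv (mulRight R (δ g) ∘ₗ ι₁ ∘ₗ S) * toConv δ := by
  have hδ := algHom_comp_convMul (Bialgebra.comulAlgHom R H) (mulRight R g ∘ₗ S) LinearMap.id
  simp only [Bialgebra.toLinearMap_comulAlgHom, LinearMap.comp_id] at hδ
  rw [adConv, hδ, ← LinearMap.comp_assoc, comul_comp_mulRight, LinearMap.comp_assoc, ← mul_assoc,
    ← mulRight_comp_convMul, includeRight_convMul_comul_comp_antipode]

lemma includeRight_convMul_includeRight_comp_adConv (g : H) :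
    toConv ι₂ * toConv (ι₂ ∘ₗ (adConv R g).ofConv) = toConv (ι₂ ∘ₗ mulLeft R g) := by
  have := algHom_comp_convMul (includeRight : H →ₐ[R] H ⊗[R] H) LinearMap.id (adConv R g).ofConv
  rw [LinearMap.comp_id, toConv_ofConv, id_convMul_adConv] at this
  exact this.symm

lemma includeLeft_comp_adConv_convMul (a b : H) :
    toConv (ι₁ ∘ₗ (adConv R a).ofConv) * toConv (ι₂ ∘ₗ mulLeft R b)
      = toConv (mulRight R (a ⊗ₜ[R] b) ∘ₗ ι₁ ∘ₗ S) * toConv δ := by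
  rw [adConv, algHom_comp_convMul, LinearMap.comp_id, mul_assoc,
    includeLeft_convMul_includeRight_comp_mulLeft, convMul_mulLeft_comp]
  congr 2
  ext x
  simp

end HopfAlgebra

end

section AdjointAction
open Algebra.TensorProduct
variable {k H : Type} [Field k] [Ring H] [HopfAlgebra k H]

local notation "S" => antipode k (A := H)
local notation "δ" => comul (R := k) (A := H)
local notation "ι₁" => AlgHom.toLinearMap (includeLeft : H →ₐ[k] H ⊗[k] H)
local notation "ι₂" => AlgHom.toLinearMap (includeRight : H →ₐ[k] H ⊗[k] H)

lemma adAct_tmul (g h : H) : adAct k H (g ⊗ₜ h) = adConv k g h := by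
  simp [adAct, adConv, (ℛ k h).convMul_apply, ← (ℛ k h).eq, map_sum, tmul_sum]

lemma counit_adAct_eq_zero {g : H} (hg : counit (R := k) g = 0) (h : H) :
    counit (R := k) (adAct k H (g ⊗ₜ h)) = 0 := by
  simp [adAct_tmul, adConv, (ℛ k h).convMul_apply, hg]

lemma adAct_tmul_one (g : H) : adAct k H (g ⊗ₜ (1 : H)) = g := by
  simp [adAct_tmul, adConv, Algebra.TensorProduct.one_def]

lemma adAct_adAct (g a b : H) :
    adAct k H (adAct k H (g ⊗ₜ a) ⊗ₜ b) = adAct k H (g ⊗ₜ (a * b)) := by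
  simp [adAct_tmul, adConv, (ℛ k b).convMul_apply, (ℛ k a).convMul_apply,
    ((ℛ k a).mul (ℛ k b)).convMul_apply, Coalgebra.Repr.mul, Finset.sum_product,
    antipode_mul_antidistrib, Finset.mul_sum, Finset.sum_mul, mul_assoc]
  exact Finset.sum_comm

lemma ydL_tmul (act : H ⊗[k] H →ₗ[k] H) (ρ : H →ₗ[k] H ⊗[k] H) (g h : H) :
    ydL k H H act ρ (g ⊗ₜ h) = (toConv ι₂ * toConv (ρ ∘ₗ act ∘ₗ TensorProduct.mk k H H g)) h := by
  simp [ydL, (ℛ k h).convMul_apply, ← (ℛ k h).eq, map_sum, tmul_sum]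
  refine Finset.sum_congr rfl fun i _ => ?_
  induction ρ (act (g ⊗ₜ (ℛ k h).right i)) using TensorProduct.induction_on with
  | zero => simp
  | tmul a b => simp
  | add x y hx hy => simp [add_tmul, hx, hy, mul_add]

lemma map_adAct_mul_tmul_comul (a b h : H) :
    TensorProduct.map (adAct k H) (mul' k H) (tensorTensorTensorComm k H H H H ((a ⊗ₜ b) ⊗ₜ δ h))
      = (toConv (ι₁ ∘ₗ (adConv k a).ofConv) * toConv (ι₂ ∘ₗ mulLeft k b)) h := by
  simp [(ℛ k h).convMul_apply, ← (ℛ k h).eq, tmul_sum, adAct_tmul]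

lemma map_adAct_mul_comul (x : H ⊗[k] H) (h : H) :
    TensorProduct.map (adAct k H) (mul' k H) (tensorTensorTensorComm k H H H H (x ⊗ₜ δ h))
      = (toConv (mulRight k x ∘ₗ ι₁ ∘ₗ S) * toConv δ) h := by
  induction x using TensorProduct.induction_on with
  | zero => simp
  | tmul a b => rw [map_adAct_mul_tmul_comul, includeLeft_comp_adConv_convMul]
  | add x y hx hy =>
    have hadd : mulRight k (x + y) = mulRight k x + mulRight k y := by ext; simp [mul_add]
    rw [add_tmul, map_add, map_add, hx, hy, hadd, LinearMap.add_comp, toConv_add, add_mul]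
    rfl

lemma map_adAct_mul_one_tmul_comul (g h : H) :
    TensorProduct.map (adAct k H) (mul' k H) (tensorTensorTensorComm k H H H H ((1 ⊗ₜ g) ⊗ₜ δ h))
      = 1 ⊗ₜ (g * h) := by
  rw [map_adAct_mul_tmul_comul, adConv_one, LinearMap.algHom_comp_convOne, toConv_ofConv, one_mul]
  rfl

theorem ydL_adAct_tilDelta (g h : H) :
    ydL k H H (adAct k H) (tilDelta k H) (g ⊗ₜ h)
      = ydR k H H (adAct k H) (tilDelta k H) (g ⊗ₜ h) := by
  have hρ : tilDelta k H ∘ₗ adAct k H ∘ₗ TensorProduct.mk k H H g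
      = δ ∘ₗ (adConv k g).ofConv - ι₂ ∘ₗ (adConv k g).ofConv := by
    ext c
    simp [tilDelta, adAct_tmul]
  have hR : ydR k H H (adAct k H) (tilDelta k H) (g ⊗ₜ h)
      = TensorProduct.map (adAct k H) (mul' k H) (tensorTensorTensorComm k H H H H (δ g ⊗ₜ δ h))
        - TensorProduct.map (adAct k H) (mul' k H)
            (tensorTensorTensorComm k H H H H ((1 ⊗ₜ g) ⊗ₜ δ h)) := by
    simp [ydR, tilDelta, sub_tmul]
  rw [ydL_tmul, hρ, toConv_sub, mul_sub, includeRight_convMul_comul_comp_adConv,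
    includeRight_convMul_includeRight_comp_adConv, hR, map_adAct_mul_comul,
    map_adAct_mul_one_tmul_comul]
  rfl

end AdjointAction

lemma assoc_rTensor_mk_one {R A : Type*} [CommSemiring R] [Semiring A] [Algebra R A]
    (x : A ⊗[R] A) :
    TensorProduct.assoc R A A A ((TensorProduct.mk R A A 1).rTensor A x) = 1 ⊗ₜ x := by
  induction x using TensorProduct.induction_on <;> simp_all [tmul_add]

section Coaction
variable {k H : Type} [Field k] [Ring H] [HopfAlgebra k H]

lemma tilDelta_eq_rTensor_comp_comul :
    tilDelta k H = (LinearMap.id - Algebra.linearMap k H ∘ₗ counit).rTensor H ∘ₗ comul := by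
  ext h
  simp [tilDelta, LinearMap.rTensor_sub, LinearMap.rTensor_comp_apply]

lemma tilDelta_mem_range (h : H) :
    tilDelta k H h
      ∈ LinearMap.range ((LinearMap.ker (counit (R := k) (A := H))).subtype.rTensor H) := by
  let π : H →ₗ[k] LinearMap.ker (counit (R := k) (A := H)) :=
    (LinearMap.id - Algebra.linearMap k H ∘ₗ counit).codRestrict _ fun x => by simp
  refine ⟨π.rTensor H (comul h), ?_⟩
  rw [← LinearMap.rTensor_comp_apply, tilDelta_eq_rTensor_comp_comul]
  rfl

lemma rid_lTensor_counit_tilDelta {h : H} (hh : counit (R := k) h = 0) :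
    TensorProduct.rid k H (counit.lTensor H (tilDelta k H h)) = h := by
  simp [tilDelta, hh]

lemma assoc_rTensor_tilDelta_tilDelta (h : H) :
    TensorProduct.assoc k H H H ((tilDelta k H).rTensor H (tilDelta k H h))
      = comul.lTensor H (tilDelta k H h) := by
  simp [tilDelta, LinearMap.rTensor_sub, Algebra.TensorProduct.one_def, assoc_rTensor_mk_one]

end Coaction

/-- For a Hopf algebra `H`, the kernel of the counit, with the right
adjoint action `g ⊳ h = S(h₍₁₎) g h₍₂₎` and the right coaction
`Δ̃(h) = h₍₁₎ ⊗ h₍₂₎ − 1 ⊗ h`, is a Yetter–Drinfel'd module over `H`:  the action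
preserves `ker ε` and is a module action, `Δ̃` takes values in `(ker ε) ⊗ H` and is a
counital coassociative coaction, and the Yetter–Drinfel'd condition holds. -/
theorem stmt5 (k H : Type) [Field k] [Ring H] [HopfAlgebra k H] :
    letI ε : H →ₗ[k] k := Coalgebra.counit
    -- the adjoint action preserves ker ε and is a right module action
    ((∀ g ∈ LinearMap.ker ε, ∀ h : H, adAct k H (g ⊗ₜ h) ∈ LinearMap.ker ε) ∧
     (∀ g : H, adAct k H (g ⊗ₜ (1 : H)) = g) ∧
     (∀ g a b : H, adAct k H (adAct k H (g ⊗ₜ a) ⊗ₜ b) = adAct k H (g ⊗ₜ (a * b)))) ∧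
    -- Δ̃ is well defined with values in (ker ε) ⊗ H
    (∀ h ∈ LinearMap.ker ε,
      tilDelta k H h ∈ LinearMap.range (rTensor H (LinearMap.ker ε).subtype)) ∧
    -- Δ̃ is counital and coassociative on ker ε
    (∀ h ∈ LinearMap.ker ε,
      (TensorProduct.rid k H) ((lTensor H ε) (tilDelta k H h)) = h) ∧
    (∀ h ∈ LinearMap.ker ε,
      (TensorProduct.assoc k H H H) ((rTensor H (tilDelta k H)) (tilDelta k H h))
        = (lTensor H (Coalgebra.comul (R := k))) (tilDelta k H h)) ∧
    -- the Yetter–Drinfel'd compatibility condition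
    (∀ g ∈ LinearMap.ker ε, ∀ h : H,
      ydL k H H (adAct k H) (tilDelta k H) (g ⊗ₜ h)
        = ydR k H H (adAct k H) (tilDelta k H) (g ⊗ₜ h)) :=
  ⟨⟨fun _ hg h => counit_adAct_eq_zero hg h, adAct_tmul_one, adAct_adAct⟩,
    fun h _ => tilDelta_mem_range h,
    fun _ hh => rid_lTensor_counit_tilDelta hh,
    fun h _ => assoc_rTensor_tilDelta_tilDelta h,
    fun g _ h => ydL_adAct_tilDelta g h⟩
end

section
/- Let H be a Hopf algebra over a field k, M a right H-module and right H-comodule, and q : M → ker ε a map which is right H-linear with respect to the right adjoint action of H on ker ε (q(xh) = S(h₍₁₎) q(x) h₍₂₎) and right H-colinear with respect to the coaction Δ̃(h) = h₍₁₎ ⊗ h₍₂₎ − 1 ⊗ h on ker ε. Then τ(x ⊗ y) := y₍₀₎ ⊗ x y₍₁₎ and x ◁ y := x q(y) turn M into a braided Leibniz algebra, i.e., (x ◁ y) ◁ z = x ◁ (y ◁ z) + (x ◁ z⟨1⟩) ◁ y⟨2⟩ for all x, y, z ∈ M, where τ(y ⊗ z) = z⟨1⟩ ⊗ y⟨2⟩.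 -/
/-!
In any Hopf algebra `g₁ (a ⊳ g₂) = g₁ S(g₂) a g₃ = ε(g₁) a g₂ = a g`. Colinearity of `q` gives
`Δ(q z) = 1 ⊗ q z + q(z₍₀₎) ⊗ z₍₁₎`, so with `a = q y`, `g = q z` the product `q y · q z` splits
into `q y ⊳ q z = q (y q z)` and `q(z₍₀₎) (q y ⊳ z₍₁₎) = q(z₍₀₎) q(y z₍₁₎)`, by linearity of `q`.
Letting `x` act turns these two terms into the two terms of the Leibniz identity.
-/

open TensorProduct LinearMap

section

open Coalgebra HopfAlgebra

variable {k H : Type} [Field k] [Ring H] [HopfAlgebra k H]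

lemma adAct_tmul_s15 {ι : Type*} (a g : H) (r : Repr k g ι) :
    adAct k H (a ⊗ₜ g) = ∑ i ∈ r.index, antipode k (r.left i) * a * r.right i := by
  simp only [adAct, comp_apply, lTensor_tmul, ← r.eq, tmul_sum, map_sum, rTensor_tmul,
    LinearEquiv.coe_coe, assoc_symm_tmul, comm_tmul, mul'_apply, mul_assoc]

lemma mul'_lTensor_adAct_comul (a g : H) :
    mul' k H (lTensor H (adAct k H ∘ₗ mk k H H a) (comul g)) = a * g := by
  let r := Repr.arbitrary k g
  let r₁ := fun i ↦ Repr.arbitrary k (r.left i)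
  let r₂ := fun i ↦ Repr.arbitrary k (r.right i)
  let F : H ⊗[k] (H ⊗[k] H) →ₗ[k] H :=
    mul' k H ∘ₗ lTensor H (mul' k H ∘ₗ rTensor H (mulRight k a ∘ₗ antipode k))
  have hF (b c d : H) : F (b ⊗ₜ (c ⊗ₜ d)) = b * (antipode k c * a * d) := by
    simp [F, mul_assoc]
  have hcoassoc := congr(F $(sum_tmul_tmul_eq r r₁ r₂))
  simp only [map_sum, hF] at hcoassoc
  calc mul' k H (lTensor H (adAct k H ∘ₗ mk k H H a) (comul g))
      = ∑ i ∈ r.index, r.left i * adAct k H (a ⊗ₜ r.right i) := by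
        simp only [← r.eq, map_sum, lTensor_tmul, comp_apply, mk_apply, mul'_apply]
    _ = ∑ i ∈ r.index, ∑ j ∈ (r₂ i).index,
          r.left i * (antipode k ((r₂ i).left j) * a * (r₂ i).right j) := by
        simp only [adAct_tmul_s15 _ _ (r₂ _), Finset.mul_sum]
    _ = ∑ i ∈ r.index, ∑ j ∈ (r₁ i).index,
          (r₁ i).left j * antipode k ((r₁ i).right j) * (a * r.right i) := by
        rw [← hcoassoc]; simp only [mul_assoc]
    _ = ∑ i ∈ r.index, counit (R := k) (r.left i) • (a * r.right i) := by
        simp only [← Finset.sum_mul, sum_mul_antipode_eq_smul, smul_one_mul]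
    _ = a * g := by
        simp only [← mul_smul_comm, ← Finset.mul_sum, sum_counit_smul]

end

theorem stmt15_general (k H M : Type) [Field k] [Ring H] [HopfAlgebra k H]
    [AddCommGroup M] [Module k M]
    (act : M ⊗[k] H →ₗ[k] M) (ρ : M →ₗ[k] M ⊗[k] H)
    -- M is a right H-module
    (hact_mul : ∀ (m : M) (a b : H),
      act (act (m ⊗ₜ a) ⊗ₜ b) = act (m ⊗ₜ (a * b)))
    (q : M →ₗ[k] H)
    -- q is H-linear for the right adjoint action on ker ε
    (hq_lin : ∀ (x : M) (h : H), q (act (x ⊗ₜ h)) = adAct k H (q x ⊗ₜ h))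
    -- q is H-colinear for the coaction Δ̃ on ker ε
    (hq_colin : ∀ x : M,
      Coalgebra.comul (R := k) (q x) - (1 : H) ⊗ₜ[k] q x = (rTensor H q) (ρ x)) :
    ∀ x y z : M,
      act (act (x ⊗ₜ q y) ⊗ₜ q z)
        = act (x ⊗ₜ q (act (y ⊗ₜ q z)))
          + (act ∘ₗ TensorProduct.map
              ((act ∘ₗ (TensorProduct.mk k M H) x) ∘ₗ q)
              (q ∘ₗ act ∘ₗ (TensorProduct.mk k M H) y)) (ρ z) := by
  intro x y z
  have hsplit : q y * q z = adAct k H (q y ⊗ₜ q z)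
      + mul' k H (lTensor H (adAct k H ∘ₗ mk k H H (q y)) (rTensor H q (ρ z))) := by
    rw [← mul'_lTensor_adAct_comul (k := k), sub_eq_iff_eq_add'.mp (hq_colin z)]
    simp only [map_add, lTensor_tmul, comp_apply, mk_apply, mul'_apply, one_mul]
  have hbraid (t : M ⊗[k] H) :
      act (x ⊗ₜ mul' k H (lTensor H (adAct k H ∘ₗ mk k H H (q y)) (rTensor H q t)))
        = (act ∘ₗ TensorProduct.map ((act ∘ₗ mk k M H x) ∘ₗ q)
            (q ∘ₗ act ∘ₗ mk k M H y)) t := by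
    induction t using TensorProduct.induction_on with
    | zero => simp
    | tmul m h => simp [hq_lin, hact_mul]
    | add t t' ht ht' => simp only [map_add, tmul_add, ht, ht']
  rw [hact_mul, hsplit, tmul_add, map_add, hq_lin, hbraid]

/-- Let `H` be a Hopf algebra, `M` a right `H`-module and right
`H`-comodule, and `q : M → ker ε` a map which is `H`-linear for the right adjoint
action of `H` on `ker ε` (`q(xh) = S(h₍₁₎) q(x) h₍₂₎`) and `H`-colinear for the
coaction `Δ̃(h) = h₍₁₎ ⊗ h₍₂₎ − 1 ⊗ h` on `ker ε`.  Then `τ(x ⊗ y) = y₍₀₎ ⊗ x y₍₁₎`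
and `x ◁ y := x q(y)` make `M` a braided Leibniz algebra:
`(x ◁ y) ◁ z = x ◁ (y ◁ z) + (x ◁ z⟨1⟩) ◁ y⟨2⟩`. -/
theorem stmt15 (k H M : Type) [Field k] [Ring H] [HopfAlgebra k H]
    [AddCommGroup M] [Module k M]
    (act : M ⊗[k] H →ₗ[k] M) (ρ : M →ₗ[k] M ⊗[k] H)
    -- M is a right H-module
    (hact_one : ∀ m : M, act (m ⊗ₜ (1 : H)) = m)
    (hact_mul : ∀ (m : M) (a b : H),
      act (act (m ⊗ₜ a) ⊗ₜ b) = act (m ⊗ₜ (a * b)))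
    -- M is a right H-comodule
    (hcounit : ∀ m : M,
      (TensorProduct.rid k M) ((lTensor M (Coalgebra.counit (R := k))) (ρ m)) = m)
    (hcoassoc : ∀ m : M,
      (TensorProduct.assoc k M H H) ((rTensor H ρ) (ρ m))
        = (lTensor M (Coalgebra.comul (R := k))) (ρ m))
    -- q takes values in ker ε
    (q : M →ₗ[k] H)
    (hq_ker : ∀ x : M, Coalgebra.counit (R := k) (q x) = 0)
    -- q is H-linear for the right adjoint action on ker ε
    (hq_lin : ∀ (x : M) (h : H), q (act (x ⊗ₜ h)) = adAct k H (q x ⊗ₜ h))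
    -- q is H-colinear for the coaction Δ̃ on ker ε
    (hq_colin : ∀ x : M,
      Coalgebra.comul (R := k) (q x) - (1 : H) ⊗ₜ[k] q x = (rTensor H q) (ρ x)) :
    ∀ x y z : M,
      act (act (x ⊗ₜ q y) ⊗ₜ q z)
        = act (x ⊗ₜ q (act (y ⊗ₜ q z)))
          + (act ∘ₗ TensorProduct.map
              ((act ∘ₗ (TensorProduct.mk k M H) x) ∘ₗ q)
              (q ∘ₗ act ∘ₗ (TensorProduct.mk k M H) y)) (ρ z) :=
  stmt15_general k H M act ρ hact_mul q hq_lin hq_colin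
end

section
/- Let p : X → G be an augmented rack over a group G and k a field. On the free k-vector space kX define the linear maps τ : kX ⊗ kX → kX ⊗ kX and ◁ : kX ⊗ kX → kX on basis elements x, y ∈ X by τ(x ⊗ y) := y ⊗ (x · p(y)) and x ◁ y := x · p(y) − x. Then (kX, ◁, τ) is a braided Leibniz algebra: (x ◁ y) ◁ z = x ◁ (y ◁ z) + (x ◁ z⟨1⟩) ◁ y⟨2⟩ for all x, y, z ∈ kX, where τ(y ⊗ z) = z⟨1⟩ ⊗ y⟨2⟩; that is, on basis elements x, y, z ∈ X the identity (x ◁ y) ◁ z = x ◁ (y ◁ z) + (x ◁ z) ◁ (y · p(z)) holds, extended linearly. -/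
open TensorProduct LinearMap

theorem stmt18_aux (k G X : Type) [Field k] [Group G]
    (act : X → G → X)
    (act_one : ∀ x : X, act x 1 = x)
    (act_mul : ∀ (x : X) (g h : G), act (act x g) h = act x (g * h))
    (p : X → G)
    (aug : ∀ (x : X) (g : G), p (act x g) = g⁻¹ * p x * g)
    (L : (X →₀ k) ⊗[k] (X →₀ k) →ₗ[k] (X →₀ k))
    (τ : (X →₀ k) ⊗[k] (X →₀ k) →ₗ[k] (X →₀ k) ⊗[k] (X →₀ k))
    (hL : ∀ a b : X, L (Finsupp.single a 1 ⊗ₜ Finsupp.single b 1)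
      = Finsupp.single (act a (p b)) 1 - Finsupp.single a 1)
    (hτ : ∀ a b : X, τ (Finsupp.single a 1 ⊗ₜ Finsupp.single b 1)
      = Finsupp.single b (1:k) ⊗ₜ Finsupp.single (act a (p b)) (1:k)) :
    L ∘ₗ rTensor (X →₀ k) L
      = L ∘ₗ lTensor (X →₀ k) L ∘ₗ (TensorProduct.assoc k (X →₀ k) (X →₀ k) (X →₀ k)).toLinearMap
        + L ∘ₗ rTensor (X →₀ k) L ∘ₗ (TensorProduct.assoc k (X →₀ k) (X →₀ k) (X →₀ k)).symm.toLinearMap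
            ∘ₗ lTensor (X →₀ k) τ ∘ₗ (TensorProduct.assoc k (X →₀ k) (X →₀ k) (X →₀ k)).toLinearMap := by
  ext x y z : 8
  simp only [LinearMap.comp_apply, LinearMap.add_apply, rTensor_tmul, lTensor_tmul,
    LinearEquiv.coe_coe, TensorProduct.assoc_tmul, TensorProduct.assoc_symm_tmul,
    AlgebraTensorModule.curry_apply, TensorProduct.curry_apply, LinearMap.coe_restrictScalars, Finsupp.lsingle_apply, hL, hτ]
  rw [TensorProduct.sub_tmul, map_sub, TensorProduct.tmul_sub, map_sub,
    TensorProduct.sub_tmul, map_sub]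
  simp only [hL, act_mul, aug, act_one]
  group
  abel

/-- Let `p : X → G` be an augmented rack over a group `G` and `k` a
field.  On the free vector space `kX` define, on basis elements,
`τ(x ⊗ y) := y ⊗ (x·p(y))` and `x ◁ y := x·p(y) − x`.  Then `(kX, ◁, τ)` is a braided
Leibniz algebra: after linear extension, the identity
`(x ◁ y) ◁ z = x ◁ (y ◁ z) + (x ◁ z⟨1⟩) ◁ y⟨2⟩` (with `τ(y ⊗ z) = z⟨1⟩ ⊗ y⟨2⟩`)
holds, i.e. `(x ◁ y) ◁ z = x ◁ (y ◁ z) + (x ◁ z) ◁ (y·p(z))` on basis elements. -/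
theorem stmt18 (k G X : Type) [Field k] [Group G]
    (act : X → G → X)
    (act_one : ∀ x : X, act x 1 = x)
    (act_mul : ∀ (x : X) (g h : G), act (act x g) h = act x (g * h))
    (p : X → G)
    (aug : ∀ (x : X) (g : G), p (act x g) = g⁻¹ * p x * g) :
    letI kX := X →₀ k
    letI L : kX ⊗[k] kX →ₗ[k] kX :=
      TensorProduct.lift (Finsupp.lift (kX →ₗ[k] kX) k X fun x =>
        Finsupp.lift kX k X fun y =>
          Finsupp.single (act x (p y)) 1 - Finsupp.single x 1)
    letI τ : kX ⊗[k] kX →ₗ[k] kX ⊗[k] kX :=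
      TensorProduct.lift (Finsupp.lift (kX →ₗ[k] kX ⊗[k] kX) k X fun x =>
        Finsupp.lift (kX ⊗[k] kX) k X fun y =>
          Finsupp.single y (1 : k) ⊗ₜ Finsupp.single (act x (p y)) (1 : k))
    L ∘ₗ rTensor kX L
      = L ∘ₗ lTensor kX L ∘ₗ (TensorProduct.assoc k kX kX kX).toLinearMap
        + L ∘ₗ rTensor kX L ∘ₗ (TensorProduct.assoc k kX kX kX).symm.toLinearMap
            ∘ₗ lTensor kX τ ∘ₗ (TensorProduct.assoc k kX kX kX).toLinearMap := by
  exact stmt18_aux k G X act act_one act_mul p aug _ _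
    (fun a b => by simp [Finsupp.lift_apply, Finsupp.sum_single_index])
    (fun a b => by simp [Finsupp.lift_apply, Finsupp.sum_single_index])
end
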